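/- If an allocation A is both WEF-able and WEF(x,y) for x,y ∈ [0,1], then every edge cost in its weighted envy graph is at most (x+y)·V/w_1, every path has at most n−1 edges so ℓ_i(A) ≤ (x+y)(n−1)V/w_1, and the total minimal subsidy is at most (x+y)(W−w_1)(n−1)V/w_1. -/

import Mathlib

/-- Sum of edge costs along the consecutive pairs of a list (a directed path). -/
noncomputable def pathCost {n : ℕ} (c : Fin n → Fin n → ℝ) (p : List (Fin n)) : ℝ :=
  ((p.zip p.tail).map fun q => c q.1 q.2).sum

/-- Sum of edge costs along a cycle `i₁,…,i_r,i₁`. -/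
noncomputable def cycleCost {n : ℕ} (c : Fin n → Fin n → ℝ) (p : List (Fin n)) : ℝ :=
  ((p.zip (p.rotate 1)).map fun q => c q.1 q.2).sum

/-- Weighted envy edge cost without subsidies. -/
noncomputable def envyCost {n : ℕ} (v : Fin n → Fin n → ℝ) (w : Fin n → ℝ) (i j : Fin n) : ℝ :=
  v i j / w j - v i i / w i

/-- Weighted envy edge cost with subsidy vector `s`. -/
noncomputable def envyCostS {n : ℕ} (v : Fin n → Fin n → ℝ) (w : Fin n → ℝ) (s : Fin n → ℝ)
    (i j : Fin n) : ℝ :=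
  (v i j + s j) / w j - (v i i + s i) / w i

/-- `(A,s)` is weighted-envy-free. -/
def IsWEF {n : ℕ} (v : Fin n → Fin n → ℝ) (w : Fin n → ℝ) (s : Fin n → ℝ) : Prop :=
  ∀ i j, (v i j + s j) / w j ≤ (v i i + s i) / w i

/-- The set of costs of (vertex-distinct) directed paths starting at `i`. -/
noncomputable def pathCostsFrom {n : ℕ} (c : Fin n → Fin n → ℝ) (i : Fin n) : Set ℝ :=
  {x | ∃ p : List (Fin n), p ≠ [] ∧ p.Nodup ∧ p.head? = some i ∧ pathCost c p = x}

lemma pathCost_single {n : ℕ} (c : Fin n → Fin n → ℝ) (a : Fin n) : pathCost c [a] = 0 := rfl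

lemma pathCost_cons_cons {n : ℕ} (c : Fin n → Fin n → ℝ) (a b : Fin n) (l : List (Fin n)) :
    pathCost c (a :: b :: l) = c a b + pathCost c (b :: l) := by
  simp [pathCost]

lemma pathCost_append {n : ℕ} (c : Fin n → Fin n → ℝ) (u : List (Fin n)) (a : Fin n)
    (t : List (Fin n)) :
    pathCost c (u ++ a :: t) = pathCost c (u ++ [a]) + pathCost c (a :: t) := by
  induction u generalizing a t with
  | nil => simp [pathCost_single]
  | cons x u' ih =>
    cases u' with
    | nil =>
      cases t with
      | nil => simp [pathCost_cons_cons, pathCost_single]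
      | cons b t' => simp [pathCost_cons_cons, pathCost_single]
    | cons y u'' =>
      have h1 := ih a t
      simp only [List.cons_append, pathCost_cons_cons] at *
      linarith

lemma cycleCost_eq {n : ℕ} (c : Fin n → Fin n → ℝ) (a : Fin n) (b : List (Fin n)) :
    cycleCost c (a :: b) = pathCost c ((a :: b) ++ [a]) := by
  unfold cycleCost pathCost
  congr 1
  have hrot : (a :: b).rotate 1 = b ++ [a] := by
    rw [List.rotate_cons_succ, List.rotate_zero]
  rw [hrot]
  have : ((a :: b) ++ [a]).tail = b ++ [a] := by simp
  rw [this]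
  have hz : ((a :: b) ++ [a]).zip ((b ++ [a]) ++ []) = (a :: b).zip (b ++ [a]) ++ [a].zip [] := by
    apply List.zip_append
    simp
  simp only [List.append_nil, List.zip_nil_right, List.cons_append] at hz
  exact congrArg (List.map fun q => c q.1 q.2) hz.symm

lemma exists_nodup_path {n : ℕ} (c : Fin n → Fin n → ℝ)
    (hcyc : ∀ p : List (Fin n), p ≠ [] → cycleCost c p ≤ 0) :
    ∀ (L : ℕ) (q : List (Fin n)), q.length ≤ L → q ≠ [] →
      ∃ q' : List (Fin n), q' ≠ [] ∧ q'.Nodup ∧ q'.head? = q.head? ∧ q' ⊆ q ∧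
        pathCost c q ≤ pathCost c q' := by
  intro L
  induction L with
  | zero =>
    intro q hlen hne
    exact absurd (List.length_eq_zero_iff.mp (Nat.le_zero.mp hlen)) hne
  | succ L ih =>
    intro q hlen hne
    obtain ⟨a, t, rfl⟩ := List.exists_cons_of_ne_nil hne
    by_cases ha : a ∈ t
    · obtain ⟨b, c', rfl⟩ := List.append_of_mem ha
      -- q = a :: (b ++ a :: c')
      have hdec : pathCost c (a :: (b ++ a :: c')) ≤ pathCost c (a :: c') := by
        have h1 : a :: (b ++ a :: c') = (a :: b) ++ a :: c' := by simp
        rw [h1, pathCost_append]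
        have h2 := hcyc (a :: b) (by simp)
        rw [cycleCost_eq] at h2
        linarith
      have hlen' : (a :: c').length ≤ L := by
        simp only [List.length_cons, List.length_append] at hlen ⊢
        omega
      obtain ⟨q', hq1, hq2, hq3, hq4, hq5⟩ := ih (a :: c') hlen' (by simp)
      refine ⟨q', hq1, hq2, by simpa using hq3, ?_, le_trans hdec hq5⟩
      intro z hz
      have := hq4 hz
      simp only [List.mem_cons, List.mem_append] at this ⊢
      tauto
    · cases t with
      | nil => exact ⟨[a], by simp, by simp, rfl, fun z hz => hz, le_rfl⟩
      | cons b t' =>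
        have hlen' : (b :: t').length ≤ L := by
          simp only [List.length_cons] at hlen ⊢; omega
        obtain ⟨r, hr1, hr2, hr3, hr4, hr5⟩ := ih (b :: t') hlen' (by simp)
        obtain ⟨b', r', rfl⟩ := List.exists_cons_of_ne_nil hr1
        obtain rfl : b' = b := by simpa using hr3
        refine ⟨a :: b' :: r', by simp, ?_, by simp, ?_, ?_⟩
        · refine List.nodup_cons.mpr ⟨fun hmem => ha (hr4 hmem), hr2⟩
        · intro z hz
          rcases List.mem_cons.mp hz with rfl | h
          · exact List.mem_cons_self
          · exact List.mem_cons_of_mem _ (hr4 h)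
        · rw [pathCost_cons_cons, pathCost_cons_cons]
          linarith

/-- If an allocation is WEF-able and WEF(x,y), then each edge of the weighted
envy graph costs at most (x+y)V/w₁, each ℓᵢ is at most (x+y)(n−1)V/w₁, and
the total minimal subsidy is at most (x+y)(W−w₁)(n−1)V/w₁. -/
theorem wefxy_subsidy_bound {n m : ℕ}
    (w : Fin (n + 1) → ℝ) (hw : ∀ i, 0 < w i) (hmin : ∀ i, w 0 ≤ w i)
    (val : Fin (n + 1) → Fin m → ℝ) (h0 : ∀ i o, 0 ≤ val i o)
    (V : ℝ) (hVpos : 0 ≤ V) (hV : ∀ i o, val i o ≤ V)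
    (A : Fin (n + 1) → Finset (Fin m))
    (v : Fin (n + 1) → Fin (n + 1) → ℝ)
    (hv : ∀ i j, v i j = ∑ o ∈ A j, val i o)
    (x y : ℝ) (hx : x ∈ Set.Icc (0 : ℝ) 1) (hy : y ∈ Set.Icc (0 : ℝ) 1)
    (hWEFxy : ∀ i j, ∃ B ⊆ A j, B.card ≤ 1 ∧
      (v i j - x * ∑ o ∈ B, val i o) / w j ≤
        (v i i + y * ∑ o ∈ B, val i o) / w i)
    (hcyc : ∀ c : List (Fin (n + 1)), c ≠ [] → cycleCost (envyCost v w) c ≤ 0)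
    (ℓ : Fin (n + 1) → ℝ)
    (hℓ : ∀ i, IsGreatest (pathCostsFrom (envyCost v w) i) (ℓ i)) :
    (∀ i j, envyCost v w i j ≤ (x + y) * V / w 0) ∧
    (∀ i, ℓ i ≤ (x + y) * n * V / w 0) ∧
    ∑ i, w i * ℓ i ≤ (x + y) * ((∑ i, w i) - w 0) * n * V / w 0 := by

  have hw0 : 0 < w 0 := hw 0
  have hxy0 : 0 ≤ x + y := by linarith [hx.1, hy.1]
  have hE0 : 0 ≤ (x + y) * V / w 0 := by positivity
  -- Edge bound
  have edge : ∀ i j, envyCost v w i j ≤ (x + y) * V / w 0 := by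
    intro i j
    obtain ⟨B, hB, hcard, hineq⟩ := hWEFxy i j
    set s : ℝ := ∑ o ∈ B, val i o with hs
    have hs0 : 0 ≤ s := Finset.sum_nonneg fun o _ => h0 i o
    have hsV : s ≤ V := by
      rcases Finset.eq_empty_or_nonempty B with rfl | ⟨o, ho⟩
      · simpa [hs] using hVpos
      have hsub : B ⊆ {o} := fun p hp => by
        have := Finset.card_le_one.mp hcard p hp o ho
        simp [this]
      calc s ≤ ∑ o ∈ {o}, val i o :=
              Finset.sum_le_sum_of_subset_of_nonneg hsub (fun p _ _ => h0 i p)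
        _ = val i o := Finset.sum_singleton _ _
        _ ≤ V := hV i o
    have hwj := hw j
    have hwi := hw i
    have h1 : s / w j ≤ V / w 0 := div_le_div₀ hVpos hsV hw0 (hmin j)
    have h2 : s / w i ≤ V / w 0 := div_le_div₀ hVpos hsV hw0 (hmin i)
    have e1 : (v i j - x * s) / w j = v i j / w j - x * (s / w j) := by
      rw [sub_div, mul_div_assoc]
    have e2 : (v i i + y * s) / w i = v i i / w i + y * (s / w i) := by
      rw [add_div, mul_div_assoc]
    rw [e1, e2] at hineq
    have h3 : x * (s / w j) ≤ x * (V / w 0) := mul_le_mul_of_nonneg_left h1 hx.1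
    have h4 : y * (s / w i) ≤ y * (V / w 0) := mul_le_mul_of_nonneg_left h2 hy.1
    have h5 : (x + y) * V / w 0 = x * (V / w 0) + y * (V / w 0) := by ring
    unfold envyCost
    linarith
  -- Path-cost bound for any nodup path
  have pathB : ∀ p : List (Fin (n + 1)), p.Nodup →
      pathCost (envyCost v w) p ≤ (n : ℝ) * ((x + y) * V / w 0) := by
    intro p hnd
    have hlen : (p.zip p.tail).length ≤ n := by
      rw [List.length_zip]
      have hcard := hnd.length_le_card
      simp only [Fintype.card_fin] at hcard
      simp only [List.length_tail]
      omega
    have hb : ∀ z ∈ (p.zip p.tail).map fun q => envyCost v w q.1 q.2,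
        z ≤ (x + y) * V / w 0 := by
      intro z hz
      obtain ⟨⟨a, b⟩, _, rfl⟩ := List.mem_map.mp hz
      exact edge a b
    calc pathCost (envyCost v w) p
        ≤ ((p.zip p.tail).map fun q => envyCost v w q.1 q.2).length •
            ((x + y) * V / w 0) := List.sum_le_card_nsmul _ _ hb
      _ = (((p.zip p.tail).length : ℝ)) * ((x + y) * V / w 0) := by
          rw [List.length_map, nsmul_eq_mul]
      _ ≤ (n : ℝ) * ((x + y) * V / w 0) := by
          apply mul_le_mul_of_nonneg_right _ hE0
          exact_mod_cast hlen
  -- ℓ bound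
  have ellB : ∀ i, ℓ i ≤ (n : ℝ) * ((x + y) * V / w 0) := by
    intro i
    obtain ⟨p, hne, hnd, hh, hpc⟩ := (hℓ i).1
    rw [← hpc]
    exact pathB p hnd
  -- ℓ nonneg
  have ellNN : ∀ i, 0 ≤ ℓ i := by
    intro i
    exact (hℓ i).2 ⟨[i], by simp, by simp, rfl, rfl⟩
  -- existence of a zero agent
  have hzero : ∃ i₀, ℓ i₀ = 0 := by
    by_contra hcon
    push_neg at hcon
    have hpos : ∀ i, 0 < ℓ i := fun i => lt_of_le_of_ne (ellNN i) (Ne.symm (hcon i))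
    obtain ⟨i₀, hi₀⟩ := Finite.exists_min ℓ
    obtain ⟨iM, hiM⟩ := Finite.exists_max ℓ
    set ε := ℓ i₀ with hε
    have hεpos : 0 < ε := hpos i₀
    have walk : ∀ K : ℕ, ∃ q : List (Fin (n + 1)), q ≠ [] ∧
        (K : ℝ) * ε ≤ pathCost (envyCost v w) q := by
      intro K
      induction K with
      | zero => exact ⟨[0], by simp, by simp [pathCost]⟩
      | succ K ihK =>
        obtain ⟨q, hq, hcost⟩ := ihK
        set j := q.getLast hq with hj
        obtain ⟨r, hrne, hrnd, hrh, hrc⟩ := (hℓ j).1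
        obtain ⟨b, rt, rfl⟩ := List.exists_cons_of_ne_nil hrne
        obtain rfl : b = j := by simpa using hrh
        cases rt with
        | nil =>
          exfalso
          have : ℓ j = 0 := by rw [← hrc, pathCost_single]
          have := hpos j
          linarith
        | cons b2 rt' =>
          refine ⟨q.dropLast ++ j :: b2 :: rt', by simp, ?_⟩
          have hq' : q.dropLast ++ [j] = q := by
            rw [hj]; exact List.dropLast_append_getLast hq
          rw [pathCost_append, hq', hrc]
          have hεj : ε ≤ ℓ j := hi₀ j
          push_cast
          linarith
    obtain ⟨K, hK⟩ := exists_nat_gt (ℓ iM / ε)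
    obtain ⟨q, hq, hcost⟩ := walk K
    obtain ⟨q', hq'ne, hq'nd, hq'h, _, hle⟩ :=
      exists_nodup_path (envyCost v w) hcyc q.length q le_rfl hq
    have hmem : pathCost (envyCost v w) q' ∈ pathCostsFrom (envyCost v w) (q.head hq) :=
      ⟨q', hq'ne, hq'nd, by rw [hq'h, List.head?_eq_head], rfl⟩
    have h1 : pathCost (envyCost v w) q' ≤ ℓ (q.head hq) := (hℓ _).2 hmem
    have h2 : ℓ iM < (K : ℝ) * ε := by
      rwa [div_lt_iff₀ hεpos] at hK
    linarith [hiM (q.head hq)]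
  -- assemble
  refine ⟨edge, ?_, ?_⟩
  · intro i
    have := ellB i
    have he : (n : ℝ) * ((x + y) * V / w 0) = (x + y) * n * V / w 0 := by ring
    linarith [he ▸ this]
  · obtain ⟨i₀, hi₀⟩ := hzero
    have hsum1 : ∑ i, w i * ℓ i = ∑ i ∈ Finset.univ.erase i₀, w i * ℓ i := by
      rw [← Finset.add_sum_erase _ _ (Finset.mem_univ i₀), hi₀, mul_zero, zero_add]
    have hsum2 : ∑ i ∈ Finset.univ.erase i₀, w i * ℓ i ≤
        ∑ i ∈ Finset.univ.erase i₀, w i * ((n : ℝ) * ((x + y) * V / w 0)) :=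
      Finset.sum_le_sum fun i _ => mul_le_mul_of_nonneg_left (ellB i) (hw i).le
    have hsum3 : ∑ i ∈ Finset.univ.erase i₀, w i * ((n : ℝ) * ((x + y) * V / w 0)) =
        ((∑ i, w i) - w i₀) * ((n : ℝ) * ((x + y) * V / w 0)) := by
      rw [← Finset.sum_mul]
      congr 1
      rw [← Finset.add_sum_erase _ _ (Finset.mem_univ i₀)]
      ring
    have h5 : ((∑ i, w i) - w i₀) * ((n : ℝ) * ((x + y) * V / w 0)) ≤
        ((∑ i, w i) - w 0) * ((n : ℝ) * ((x + y) * V / w 0)) := by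
      apply mul_le_mul_of_nonneg_right _ (by positivity)
      linarith [hmin i₀]
    have h6 : ((∑ i, w i) - w 0) * ((n : ℝ) * ((x + y) * V / w 0)) =
        (x + y) * ((∑ i, w i) - w 0) * n * V / w 0 := by ring
    linarith [hsum1, hsum2, hsum3, h5, h6.symm ▸ le_refl (((∑ i, w i) - w 0) * ((n : ℝ) * ((x + y) * V / w 0)))]
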